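/- arXiv:1905.11322 — 6 statements merged into one kernel-verified Lean document; each statement's English description precedes it below -/
import Mathlib

section
/- Let α be the real root of x^3 - x - 1 and a = α(α+1)/(3α^2 - 1). Then the minimal polynomial of 2a over ℤ is 23x^3 - 46x^2 + 24x - 8. -/
/-!
Clearing the denominator `3α² - 1` and reducing modulo `α³ - α - 1` shows that `2a` is a root
of `23x³ - 46x² + 24x - 8`, so it remains to see that this cubic has no rational root. For a
rational root `r`, `z = 2 / r` is a root of the monic `z³ - 6z² + 23z - 23`, hence an integer by
the rational root theorem; but `z³ - 6z² + 23z - 23` is odd for every integer `z`.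
-/

open Polynomial

section PlasticNumber

variable {K : Type*} [Field K] [CharZero K] {α : K}

theorem three_mul_sq_sub_one_ne_zero_of_cubic (hα : α ^ 3 - α - 1 = 0) :
    3 * α ^ 2 - 1 ≠ 0 := by
  intro h
  have hα' : α = -3 / 2 := by linear_combination (-3 / 2 : K) * (hα - α / 3 * h)
  rw [hα'] at h
  norm_num at h

theorem cubic_two_mul_eq_zero_of_cubic (hα : α ^ 3 - α - 1 = 0) {a : K}
    (ha : a = α * (α + 1) / (3 * α ^ 2 - 1)) :
    23 * (2 * a) ^ 3 - 46 * (2 * a) ^ 2 + 24 * (2 * a) - 8 = 0 := by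
  have hden := three_mul_sq_sub_one_ne_zero_of_cubic hα
  have hmul : a * (3 * α ^ 2 - 1) = α * (α + 1) := by rw [ha]; exact div_mul_cancel₀ _ hden
  set d := 3 * α ^ 2 - 1
  set u := α * (α + 1)
  -- `d³ · (23(2a)³ - 46(2a)² + 24(2a) - 8)` is a polynomial in `ad = u`, and that polynomial in `α`
  -- is a multiple of `α³ - α - 1`
  have hcleared : d ^ 3 * (23 * (2 * a) ^ 3 - 46 * (2 * a) ^ 2 + 24 * (2 * a) - 8) = 0 := by
    linear_combination
      (184 * ((a * d) ^ 2 + a * d * u + u ^ 2) - 184 * d * (a * d + u) + 48 * d ^ 2) * hmul +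
      (-152 * α ^ 3 - 120 * α ^ 2 - 40 * α - 8) * hα
  exact (mul_eq_zero.mp hcleared).resolve_left (pow_ne_zero 3 hden)

end PlasticNumber

theorem int_cubic_inv_a_ne_zero (n : ℤ) : n ^ 3 - 6 * n ^ 2 + 23 * n - 23 ≠ 0 := by
  intro h
  have hmod2 := congrArg (Int.cast : ℤ → ZMod 2) h
  push_cast at hmod2
  generalize (n : ZMod 2) = m at hmod2
  revert m
  decide

theorem rat_cubic_two_a_ne_zero (r : ℚ) : 23 * r ^ 3 - 46 * r ^ 2 + 24 * r - 8 ≠ 0 := by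
  intro h
  have hr : r ≠ 0 := by rintro rfl; norm_num at h
  have hz : aeval (2 / r) (X ^ 3 - 6 * X ^ 2 + 23 * X - 23 : ℤ[X]) = 0 := by
    simp only [map_sub, map_add, map_mul, map_pow, aeval_X, map_ofNat]
    field_simp
    linear_combination (-1 : ℚ) * h
  have hmonic : (X ^ 3 - 6 * X ^ 2 + 23 * X - 23 : ℤ[X]).Monic := by monicity!
  obtain ⟨n, hn⟩ := isInteger_of_is_root_of_monic hmonic hz
  rw [← hn] at hz
  simp only [map_sub, map_add, map_mul, map_pow, aeval_X, map_ofNat, eq_intCast] at hz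
  exact int_cubic_inv_a_ne_zero n (by exact_mod_cast hz)

theorem natDegree_cubic_two_a : (23 * X ^ 3 - 46 * X ^ 2 + 24 * X - 8 : ℚ[X]).natDegree = 3 := by
  compute_degree!

theorem irreducible_cubic_two_a : Irreducible (23 * X ^ 3 - 46 * X ^ 2 + 24 * X - 8 : ℚ[X]) := by
  refine irreducible_of_degree_le_three_of_not_isRoot (by simp [natDegree_cubic_two_a])
    fun r hr => rat_cubic_two_a_ne_zero r ?_
  simpa using hr

theorem leadingCoeff_cubic_two_a :
    (23 * X ^ 3 - 46 * X ^ 2 + 24 * X - 8 : ℚ[X]).leadingCoeff = 23 := by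
  rw [leadingCoeff, natDegree_cubic_two_a]
  simp [coeff_X]

theorem minpoly_two_a (α a : ℝ) (hα : α ^ 3 - α - 1 = 0)
    (ha : a = α * (α + 1) / (3 * α ^ 2 - 1)) :
    Polynomial.aeval (2 * a) (23 * X ^ 3 - 46 * X ^ 2 + 24 * X - 8 : ℤ[X]) = 0 ∧
    C (23 : ℚ) * minpoly ℚ (2 * a) = 23 * X ^ 3 - 46 * X ^ 2 + 24 * X - 8 := by
  have hroot := cubic_two_mul_eq_zero_of_cubic hα ha
  have hrootℚ : aeval (2 * a) (23 * X ^ 3 - 46 * X ^ 2 + 24 * X - 8 : ℚ[X]) = 0 := by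
    simpa only [map_sub, map_add, map_mul, map_pow, aeval_X, map_ofNat] using hroot
  refine ⟨by simpa only [map_sub, map_add, map_mul, map_pow, aeval_X, map_ofNat] using hroot, ?_⟩
  rw [minpoly.Irreducible.eq_minpoly irreducible_cubic_two_a hrootℚ, leadingCoeff_cubic_two_a]
end

section
/- Let α be the real root of x^3 - x - 1 and a = α(α+1)/(3α^2 - 1). Then the minimal polynomial of a over ℤ is 23x^3 - 23x^2 + 6x - 1; in particular the norm of a from ℚ(α) to ℚ is 1/23. -/
/-!
Clearing the denominator `3α² - 1` (nonzero, since the discriminant of `x³ - x - 1` is `-23`)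
shows that `a` is a root of `23x³ - 23x² + 6x - 1`. This cubic has no rational root: for
`q = n / d` in lowest terms, its homogenization reduced mod 2 is `n³ + n²d + d³`, which
has no nontrivial zero over `𝔽₂`. So the cubic is irreducible over `ℚ` and equals `23` times
the minimal polynomial of `a`, whose constant term `-1/23` gives the norm.
-/

open Polynomial

section Field

variable {K : Type*} [Field K] [CharZero K]

theorem three_mul_sq_sub_one_ne_zero {α : K} (hα : α ^ 3 - α - 1 = 0) :
    3 * α ^ 2 - 1 ≠ 0 := by
  intro h
  have : (23 : K) = 0 := by linear_combination (18 * α - 27) * hα + (4 - 6 * α ^ 2 + 9 * α) * h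
  norm_num at this

theorem binetCoeff_cubic_eq_zero {α a : K} (hα : α ^ 3 - α - 1 = 0)
    (ha : a = α * (α + 1) / (3 * α ^ 2 - 1)) : 23 * a ^ 3 - 23 * a ^ 2 + 6 * a - 1 = 0 := by
  set s := 3 * α ^ 2 - 1
  set t := α * (α + 1)
  have hs : s ≠ 0 := three_mul_sq_sub_one_ne_zero hα
  have hat : a * s = t := by rw [ha, div_mul_cancel₀ _ hs]
  refine (mul_eq_zero.mp ?_).resolve_left (pow_ne_zero 3 hs)
  linear_combination
    (23 * ((a * s) ^ 2 + a * s * t + t ^ 2) - 23 * s * (a * s + t) + 6 * s ^ 2) * hat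
      + (-19 * α ^ 3 - 15 * α ^ 2 - 5 * α - 1) * hα

end Field

theorem binetForm_zmod_two_ne_zero : ∀ x y : ZMod 2, x ≠ 0 ∨ y ≠ 0 →
    23 * x ^ 3 - 23 * x ^ 2 * y + 6 * x * y ^ 2 - y ^ 3 ≠ 0 := by
  decide

theorem Rat.num_ne_zero_or_den_ne_zero_zmod (p : ℕ) [hp : Fact p.Prime] (q : ℚ) :
    (q.num : ZMod p) ≠ 0 ∨ (q.den : ZMod p) ≠ 0 := by
  by_contra! h
  rw [ZMod.intCast_zmod_eq_zero_iff_dvd, ZMod.natCast_eq_zero_iff] at h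
  exact Nat.not_coprime_of_dvd_of_dvd hp.out.one_lt (Int.natCast_dvd.mp h.1) h.2 q.reduced

theorem binetCubic_rat_ne_zero (q : ℚ) : 23 * q ^ 3 - 23 * q ^ 2 + 6 * q - 1 ≠ 0 := by
  intro h
  have hform : 23 * q.num ^ 3 - 23 * q.num ^ 2 * q.den + 6 * q.num * q.den ^ 2 - (q.den : ℤ) ^ 3
      = 0 := by
    have : (23 * q.num ^ 3 - 23 * q.num ^ 2 * q.den + 6 * q.num * q.den ^ 2 - q.den ^ 3 : ℚ)
        = 0 := by
      rw [← Rat.mul_den_eq_num]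
      linear_combination (q.den : ℚ) ^ 3 * h
    exact_mod_cast this
  have hform₂ := congrArg (Int.cast : ℤ → ZMod 2) hform
  push_cast at hform₂
  exact binetForm_zmod_two_ne_zero _ _ (Rat.num_ne_zero_or_den_ne_zero_zmod 2 q) hform₂

noncomputable def binetCoeffPoly (R : Type*) [CommRing R] : R[X] :=
  23 * X ^ 3 - 23 * X ^ 2 + 6 * X - 1

theorem aeval_binetCoeffPoly {R A : Type*} [CommRing R] [CommRing A] [Algebra R A] (x : A) :
    aeval x (binetCoeffPoly R) = 23 * x ^ 3 - 23 * x ^ 2 + 6 * x - 1 := by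
  simp only [binetCoeffPoly, map_sub, map_add, map_mul, map_pow, map_ofNat, aeval_X, map_one]

theorem natDegree_binetCoeffPoly : (binetCoeffPoly ℚ).natDegree = 3 := by
  unfold binetCoeffPoly
  compute_degree!

theorem leadingCoeff_binetCoeffPoly : (binetCoeffPoly ℚ).leadingCoeff = 23 := by
  rw [leadingCoeff, natDegree_binetCoeffPoly]
  simp [binetCoeffPoly, coeff_X, coeff_one]

theorem irreducible_binetCoeffPoly : Irreducible (binetCoeffPoly ℚ) := by
  have hdeg := natDegree_binetCoeffPoly
  refine (irreducible_iff_roots_eq_zero_of_degree_le_three (by omega) (by omega)).mpr ?_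
  refine Multiset.eq_zero_of_forall_notMem fun q hq => binetCubic_rat_ne_zero q ?_
  rw [← aeval_binetCoeffPoly (R := ℚ), ← eval_map_algebraMap, Algebra.algebraMap_self, map_id]
  exact (mem_roots'.mp hq).2

theorem minpoly_a (α a : ℝ) (hα : α ^ 3 - α - 1 = 0)
    (ha : a = α * (α + 1) / (3 * α ^ 2 - 1)) :
    (Polynomial.aeval a (23 * X ^ 3 - 23 * X ^ 2 + 6 * X - 1 : ℤ[X]) = 0 ∧
      C (23 : ℚ) * minpoly ℚ a = 23 * X ^ 3 - 23 * X ^ 2 + 6 * X - 1) ∧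
    (-1 : ℚ) ^ (minpoly ℚ a).natDegree * (minpoly ℚ a).coeff 0 = 1 / 23 := by
  have hroot := binetCoeff_cubic_eq_zero hα ha
  have hmin : binetCoeffPoly ℚ * C 23⁻¹ = minpoly ℚ a := by
    rw [← leadingCoeff_binetCoeffPoly]
    exact minpoly.eq_of_irreducible irreducible_binetCoeffPoly (by rwa [aeval_binetCoeffPoly])
  refine ⟨⟨by rwa [← binetCoeffPoly, aeval_binetCoeffPoly], ?_⟩, ?_⟩
  · rw [← hmin, mul_comm, mul_assoc, ← C_mul]
    norm_num [binetCoeffPoly]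
  · rw [← hmin, natDegree_mul_C (by norm_num), natDegree_binetCoeffPoly, coeff_mul_C]
    norm_num [binetCoeffPoly]
end

section
/- Let α be the real root of x^3 - x - 1 and a = α(α+1)/(3α^2 - 1). Then α and 2a are multiplicatively independent, i.e., if α^m · (2a)^n = 1 for integers m, n, then m = n = 0. -/
/-!
In `ℚ(α)` the field norm is multiplicative, `N(α) = 1` and `N(2a) = 8/23`, so
`α ^ m (2a) ^ n = 1` forces `(8/23) ^ n = 1`, hence `n = 0`; then `α ^ m = 1` with `α > 1`
gives `m = 0`.
The norm is computed on coordinates in the basis `1, α, α²`, which are unique because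
`X³ - X - 1` is irreducible over `ℚ`.
-/

open Polynomial

namespace Plastic

variable {K : Type*} [Field K] {α : K}

/-- The determinant of multiplication by `p + q α + r α²` on the basis `1, α, α²`,
where `α³ = α + 1`. -/
def normForm (p q r : ℚ) : ℚ :=
  p * ((p + r) * (p + r) - q * (q + r)) - r * (q * (p + r) - r * (q + r)) +
    q * (q * q - r * (p + r))

theorem normForm_mul (p q r p' q' r' : ℚ) :
    normForm (p * p' + q * r' + r * q') (p * q' + q * p' + q * r' + r * q' + r * r')
      (p * r' + q * q' + r * p' + r * r') = normForm p q r * normForm p' q' r' := by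
  simp only [normForm]; ring

/-- Encodes `x ∈ ℚ(α)` with `N_{ℚ(α)/ℚ}(x) = t` without building `ℚ(α)`; well defined by
`HasNorm.unique`. -/
def HasNorm (α x : K) (t : ℚ) : Prop :=
  ∃ p q r : ℚ, x = p + q * α + r * α ^ 2 ∧ normForm p q r = t

theorem hasNorm_one : HasNorm α 1 1 := ⟨1, 0, 0, by simp, by simp [normForm]⟩

theorem hasNorm_self : HasNorm α α 1 := ⟨0, 1, 0, by simp, by simp [normForm]⟩

theorem hasNorm_inv_self (hα : α ^ 3 - α - 1 = 0) : HasNorm α α⁻¹ 1 := by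
  refine ⟨-1, 0, 1, ?_, by simp [normForm]⟩
  rw [inv_eq_of_mul_eq_one_left (a := α ^ 2 - 1) (by linear_combination hα)]
  push_cast; ring

variable [CharZero K]

theorem minpoly_eq (hα : α ^ 3 - α - 1 = 0) : minpoly ℚ α = X ^ 3 - X - 1 :=
  (minpoly.eq_of_irreducible_of_monic (X_pow_sub_X_sub_one_irreducible_rat (by norm_num))
    (by simpa using hα) (by monicity!)).symm

theorem eq_zero_of_add_mul_add_mul_sq_eq_zero (hα : α ^ 3 - α - 1 = 0) {p q r : ℚ}
    (h : (p : K) + q * α + r * α ^ 2 = 0) : p = 0 ∧ q = 0 ∧ r = 0 := by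
  set P : ℚ[X] := C p + C q * X + C r * X ^ 2
  have hP : P = 0 := by
    by_contra hP
    have h3 := minpoly.degree_le_of_ne_zero ℚ α hP (by simpa [P] using h)
    rw [minpoly_eq hα, show (X ^ 3 - X - 1 : ℚ[X]).degree = 3 by compute_degree!] at h3
    have h2 : P.degree ≤ 2 := by simp only [P]; compute_degree
    exact absurd (h3.trans h2) (by decide)
  refine ⟨?_, ?_, ?_⟩
  · simpa [P] using congr_arg (coeff · 0) hP
  · simpa [P] using congr_arg (coeff · 1) hP
  · simpa [P] using congr_arg (coeff · 2) hP

namespace HasNorm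

variable {x y : K} {s t : ℚ}

theorem mul (hα : α ^ 3 - α - 1 = 0) (hx : HasNorm α x s) (hy : HasNorm α y t) :
    HasNorm α (x * y) (s * t) := by
  obtain ⟨p, q, r, rfl, rfl⟩ := hx
  obtain ⟨p', q', r', rfl, rfl⟩ := hy
  refine ⟨_, _, _, ?_, normForm_mul p q r p' q' r'⟩
  push_cast
  linear_combination ((q : K) * r' + r * q' + r * r' * α) * hα

theorem pow (hα : α ^ 3 - α - 1 = 0) (hx : HasNorm α x s) (k : ℕ) :
    HasNorm α (x ^ k) (s ^ k) := by
  induction k with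
  | zero => simpa using hasNorm_one
  | succ k ih => simpa only [pow_succ] using ih.mul hα hx

theorem zpow (hα : α ^ 3 - α - 1 = 0) (hx : HasNorm α x s) (hx' : HasNorm α x⁻¹ s⁻¹)
    (k : ℤ) : HasNorm α (x ^ k) (s ^ k) := by
  cases k with
  | ofNat k => simpa using hx.pow hα k
  | negSucc k => simpa only [zpow_negSucc, ← inv_pow] using hx'.pow hα (k + 1)

theorem unique (hα : α ^ 3 - α - 1 = 0) (hs : HasNorm α x s) (ht : HasNorm α x t) :
    s = t := by
  obtain ⟨p, q, r, rfl, rfl⟩ := hs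
  obtain ⟨p', q', r', h, rfl⟩ := ht
  obtain ⟨hp, hq, hr⟩ := eq_zero_of_add_mul_add_mul_sq_eq_zero hα
    (p := p - p') (q := q - q') (r := r - r') (by push_cast; linear_combination h)
  rw [sub_eq_zero.mp hp, sub_eq_zero.mp hq, sub_eq_zero.mp hr]

end HasNorm

theorem three_mul_sq_sub_one_ne_zero (hα : α ^ 3 - α - 1 = 0) : 3 * α ^ 2 - 1 ≠ 0 := by
  intro h
  simpa using (eq_zero_of_add_mul_add_mul_sq_eq_zero hα (p := -1) (q := 0) (r := 3)
    (by push_cast; linear_combination h)).2.2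

theorem two_mul_a_eq (hα : α ^ 3 - α - 1 = 0) :
    2 * (α * (α + 1) / (3 * α ^ 2 - 1)) = 6 / 23 + 2 / 23 * α + 14 / 23 * α ^ 2 := by
  rw [mul_div_assoc', div_eq_iff (three_mul_sq_sub_one_ne_zero hα)]
  linear_combination -(42 * α + 6) / 23 * hα

theorem hasNorm_two_mul_a (hα : α ^ 3 - α - 1 = 0) :
    HasNorm α (2 * (α * (α + 1) / (3 * α ^ 2 - 1))) (8 / 23) :=
  ⟨6 / 23, 2 / 23, 14 / 23, by rw [two_mul_a_eq hα]; push_cast; ring, by norm_num [normForm]⟩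

theorem hasNorm_two_mul_a_inv (hα : α ^ 3 - α - 1 = 0) :
    HasNorm α (2 * (α * (α + 1) / (3 * α ^ 2 - 1)))⁻¹ (8 / 23)⁻¹ := by
  refine ⟨2, 1, -3 / 2, ?_, by norm_num [normForm]⟩
  rw [inv_eq_of_mul_eq_one_left (a := 2 + α - 3 / 2 * α ^ 2)]
  · push_cast; ring
  · rw [two_mul_a_eq hα]; linear_combination (11 / 23 - 21 / 23 * α) * hα

theorem hasNorm_zpow_self (hα : α ^ 3 - α - 1 = 0) (m : ℤ) : HasNorm α (α ^ m) 1 := by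
  simpa using hasNorm_self.zpow hα (by simpa using hasNorm_inv_self hα) m

theorem hasNorm_two_mul_a_zpow (hα : α ^ 3 - α - 1 = 0) (n : ℤ) :
    HasNorm α ((2 * (α * (α + 1) / (3 * α ^ 2 - 1))) ^ n) ((8 / 23) ^ n) :=
  (hasNorm_two_mul_a hα).zpow hα (hasNorm_two_mul_a_inv hα) n

end Plastic

theorem mult_indep (α a : ℝ) (hα : α ^ 3 - α - 1 = 0)
    (ha : a = α * (α + 1) / (3 * α ^ 2 - 1)) :
    ∀ m n : ℤ, α ^ m * (2 * a) ^ n = 1 → m = 0 ∧ n = 0 := by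
  intro m n h
  subst ha
  have hnorm := (Plastic.hasNorm_zpow_self hα m).mul hα (Plastic.hasNorm_two_mul_a_zpow hα n)
  rw [h] at hnorm
  have hn : n = 0 := by
    refine (zpow_eq_one_iff_right₀ (by norm_num) (by norm_num : (8 / 23 : ℚ) ≠ 1)).mp ?_
    simpa using hnorm.unique hα Plastic.hasNorm_one
  subst hn
  have hα1 : 1 < α := by nlinarith [sq_nonneg (α - 1), sq_nonneg (α + 1)]
  exact ⟨(zpow_eq_one_iff_right₀ (by positivity) hα1.ne').mp (by simpa using h), rfl⟩
end

section
/- Let d ≥ 2 be a nonsquare integer, (X₁, Y₁) the fundamental positive solution of X² - dY² = ±4, ρ = (X₁ + Y₁√d)/2, ϱ = (X₁ - Y₁√d)/2, and X_k = ρ^k + ϱ^k. Then for all k ≥ 1, ρ^k / α² ≤ X_k ≤ 2ρ^k, where α is the real root of x^3 - x - 1. -/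
/-!
Since `ρ τ = ±1`, we have `|τ ^ k| = ρ ^ (-k)`, so the upper bound is `ρ ^ (-k) ≤ ρ ^ k` and the
lower bound reduces to `ρ ^ (2k) (1 - α⁻²) ≥ 1`. The cubic gives `1 - α⁻² = α⁻³ = 1 / (α + 1)`,
so it suffices that `ρ ^ (2k) ≥ α + 1`. This follows from `α ≤ φ` and `ρ ≥ φ`, the latter because
`ρ` is the larger root of `t² - X₁ t ∓ 1`: then `ρ² ≥ ρ + 1`.
-/

open Real goldenRatio

lemma goldenRatio_le_of_add_one_le_sq {x : ℝ} (hx : 0 < x) (h : x + 1 ≤ x ^ 2) : φ ≤ x := by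
  by_contra! hlt
  have : (x - φ) * (x - ψ) < 0 :=
    mul_neg_of_neg_of_pos (by linarith) (by linarith [goldenConj_neg])
  nlinarith [goldenRatio_add_goldenConj, goldenRatio_mul_goldenConj]

section PlasticNumber

variable {α : ℝ} (hα : α ^ 3 - α - 1 = 0)
include hα

lemma one_lt_of_cubic_eq_zero : 1 < α := by
  nlinarith [sq_nonneg (α + 1), sq_nonneg α]

lemma le_goldenRatio_of_cubic_eq_zero : α ≤ φ := by
  have hα1 := one_lt_of_cubic_eq_zero hα
  by_contra! hlt
  have hfactor : 0 < α ^ 2 + α * φ + φ ^ 2 - 1 := by nlinarith [one_lt_goldenRatio]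
  nlinarith [mul_pos (sub_pos.2 hlt) hfactor, goldenRatio_sq, goldenRatio_pos]

lemma div_sq_le_sub_inv {P : ℝ} (hP : 0 < P) (h : α + 1 ≤ P ^ 2) : P / α ^ 2 ≤ P - P⁻¹ := by
  have hα0 : 0 < α := by linarith [one_lt_of_cubic_eq_zero hα]
  -- `α ^ 2 - 1 = α⁻¹`, so `P - P / α ^ 2 = P / α ^ 3 = P / (α + 1)`.
  have hsub : P - P / α ^ 2 = P / (α + 1) := by
    field_simp
    linear_combination hα
  have : P⁻¹ ≤ P / (α + 1) := by
    rw [inv_eq_one_div, div_le_div_iff₀ hP (by linarith)]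
    nlinarith
  linarith

lemma div_sq_le_add_and_add_le_two_mul {P Q : ℝ} (hP : 0 < P) (h : α + 1 ≤ P ^ 2)
    (hPQ : |P * Q| = 1) : P / α ^ 2 ≤ P + Q ∧ P + Q ≤ 2 * P := by
  have hQ : |Q| = P⁻¹ := by
    rw [abs_mul, abs_of_pos hP] at hPQ
    exact eq_inv_of_mul_eq_one_right hPQ
  have hP1 : 1 ≤ P := by nlinarith [one_lt_of_cubic_eq_zero hα]
  have hinv : P⁻¹ ≤ P := (inv_le_one_of_one_le₀ hP1).trans hP1
  constructor
  · linarith [div_sq_le_sub_inv hα hP h, neg_abs_le Q]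
  · linarith [le_abs_self Q]

end PlasticNumber

lemma half_add_mul_half_sub {d : ℝ} (hd : 0 ≤ d) (x y : ℝ) :
    (x + y * √d) / 2 * ((x - y * √d) / 2) = (x ^ 2 - d * y ^ 2) / 4 := by
  linear_combination (-y ^ 2 / 4) * sq_sqrt hd

lemma three_le_of_sq_sub_mul_sq_eq_four {d x y : ℤ} (hd : 0 < d) (hx : 0 < x) (hy : y ≠ 0)
    (h : x ^ 2 - d * y ^ 2 = 4) : 3 ≤ x := by
  by_contra! hlt
  nlinarith [mul_pos hd (pow_pos (abs_pos.2 hy) 2), sq_abs y]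

-- In the `+4` case `x ≥ 3`, so the root `ρ` of `t² - x t + 1` with `ρ ≥ 1` has `ρ² ≥ 3ρ - 1 ≥ ρ + 1`.
lemma goldenRatio_le_half_add_mul_sqrt {d x y ε : ℤ} (hd : 0 < d) (hx : 0 < x) (hy : 0 < y)
    (hε : ε = 4 ∨ ε = -4) (h : x ^ 2 - d * y ^ 2 = ε) : φ ≤ (x + y * √d) / 2 := by
  have hd' : (0 : ℝ) < d := by exact_mod_cast hd
  have hx' : (1 : ℝ) ≤ x := by exact_mod_cast hx
  have hroot : (x + y * √d) / 2 * (x - (x + y * √d) / 2) = (ε / 4 : ℝ) := by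
    rw [show (x : ℝ) - (x + y * √d) / 2 = (x - y * √d) / 2 by ring,
      half_add_mul_half_sub hd'.le]
    exact_mod_cast congr(($h : ℝ) / 4)
  have hconj : (x : ℝ) - (x + y * √d) / 2 < (x + y * √d) / 2 := by
    nlinarith [mul_pos (by exact_mod_cast hy : (0 : ℝ) < y) (sqrt_pos.2 hd')]
  generalize ((x : ℝ) + y * √d) / 2 = ρ at hroot hconj ⊢
  have hρ : 0 < ρ := by linarith
  apply goldenRatio_le_of_add_one_le_sq hρ
  rcases hε with rfl | rfl
  · have hx3 : (3 : ℝ) ≤ x := by exact_mod_cast three_le_of_sq_sub_mul_sq_eq_four hd hx hy.ne' h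
    have hρ1 : 1 ≤ ρ := by nlinarith [mul_lt_mul_of_pos_left hconj hρ]
    nlinarith
  · nlinarith

theorem pell4_X_bounds_general (d : ℤ) (hd : 2 ≤ d)
    (X₁ Y₁ : ℤ) (hX : 0 < X₁) (hY : 0 < Y₁) (ε : ℤ) (hε : ε = 4 ∨ ε = -4)
    (hpell : X₁ ^ 2 - d * Y₁ ^ 2 = ε)
    (α ρ τ : ℝ) (hα : α ^ 3 - α - 1 = 0)
    (hρ : ρ = ((X₁ : ℝ) + Y₁ * Real.sqrt d) / 2) (hτ : τ = ((X₁ : ℝ) - Y₁ * Real.sqrt d) / 2) :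
    ∀ k : ℕ, 1 ≤ k →
      ρ ^ k / α ^ 2 ≤ ρ ^ k + τ ^ k ∧ ρ ^ k + τ ^ k ≤ 2 * ρ ^ k := by
  intro k hk
  have hρφ : φ ≤ ρ := hρ ▸ goldenRatio_le_half_add_mul_sqrt (by omega) hX hY hε hpell
  have hρτ : |ρ * τ| = 1 := by
    have hd' : (0 : ℝ) ≤ d := by exact_mod_cast (by omega : 0 ≤ d)
    have hpell' : (X₁ : ℝ) ^ 2 - d * Y₁ ^ 2 = ε := by exact_mod_cast hpell
    rw [hρ, hτ, half_add_mul_half_sub hd', hpell']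
    rcases hε with rfl | rfl <;> norm_num
  apply div_sq_le_add_and_add_le_two_mul hα (pow_pos (goldenRatio_pos.trans_le hρφ) k)
  · calc α + 1 ≤ φ + 1 := by linarith [le_goldenRatio_of_cubic_eq_zero hα]
      _ = φ ^ 2 := goldenRatio_sq.symm
      _ ≤ ρ ^ 2 := by gcongr
      _ ≤ (ρ ^ k) ^ 2 := by
        gcongr
        · linarith [goldenRatio_pos]
        · exact le_self_pow₀ (one_lt_goldenRatio.le.trans hρφ) (Nat.one_le_iff_ne_zero.mp hk)
  · rw [← mul_pow, abs_pow, hρτ, one_pow]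

theorem pell4_X_bounds (d : ℤ) (hd : 2 ≤ d) (hds : ¬ IsSquare d)
    (X₁ Y₁ : ℤ) (hX : 0 < X₁) (hY : 0 < Y₁) (ε : ℤ) (hε : ε = 4 ∨ ε = -4)
    (hpell : X₁ ^ 2 - d * Y₁ ^ 2 = ε)
    (hfund : ∀ x y : ℤ, 0 < x → 0 < y → x ^ 2 - d * y ^ 2 = ε →
      (X₁ : ℝ) + Y₁ * Real.sqrt d ≤ x + y * Real.sqrt d)
    (α ρ τ : ℝ) (hα : α ^ 3 - α - 1 = 0)
    (hρ : ρ = ((X₁ : ℝ) + Y₁ * Real.sqrt d) / 2) (hτ : τ = ((X₁ : ℝ) - Y₁ * Real.sqrt d) / 2) :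
    ∀ k : ℕ, 1 ≤ k →
      ρ ^ k / α ^ 2 ≤ ρ ^ k + τ ^ k ∧ ρ ^ k + τ ^ k ≤ 2 * ρ ^ k :=
  pell4_X_bounds_general d hd X₁ Y₁ hX hY ε hε hpell α ρ τ hα hρ hτ
end

section
/- If (k, n, m) is a solution of x_k = P(n) + P(m) with 3 ≤ m < n, where x_k comes from the Pell equation x² - dy² = ±1 with fundamental solution generating δ = x₁ + y₁√d, then (n-2)·log α < k·log δ < (n+3)·log α + log 2; in particular |n - k·(log δ)/(log α)| < 6. -/
def padovan : ℕ → ℕ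
  | 0 => 0
  | 1 => 1
  | 2 => 1
  | n + 3 => padovan (n + 1) + padovan n

/-!
Both Padovan numbers and powers of the plastic number `α` satisfy `u (j + 3) = u (j + 1) + u j`,
so `α ^ (n - 3) ≤ P n ≤ α ^ (n - 1)` by induction. Since `|σ ^ k| ≤ 1`, the Pell value
`x_k = (δ ^ k + σ ^ k) / 2` is within `1/2` of `δ ^ k / 2`, which pins `δ ^ k` between
`α ^ (n - 2)` and `2 α ^ (n + 3)`; taking logarithms gives the claim, and `2 < α ^ 3` turns
the additive `log 2` into less than three more units of `log α`.
-/

theorem pow_add_three_of_pow_three_eq {R : Type*} [Semiring R] {α : R} (hα : α ^ 3 = α + 1)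
    (n : ℕ) : α ^ (n + 3) = α ^ (n + 1) + α ^ n := by
  rw [pow_add, hα, mul_add, mul_one, pow_succ]

namespace PlasticNumber

variable {α : ℝ}

theorem one_lt (hα : α ^ 3 = α + 1) : 1 < α := by
  nlinarith [sq_nonneg (α + 1), sq_nonneg (α - 1), sq_nonneg α]

theorem sq_lt_two (hα : α ^ 3 = α + 1) : α ^ 2 < 2 := by
  have h1 := one_lt hα
  nlinarith

theorem pow_le_padovan_add_three (hα : α ^ 3 = α + 1) : ∀ n : ℕ, α ^ n ≤ padovan (n + 3)
  | 0 => by simp [padovan]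
  | 1 => by norm_num [padovan]; nlinarith [one_lt hα, sq_lt_two hα]
  | 2 => by norm_num [padovan]; linarith [sq_lt_two hα]
  | n + 3 => by
    have h₁ := pow_le_padovan_add_three hα (n + 1)
    have h₀ := pow_le_padovan_add_three hα n
    rw [pow_add_three_of_pow_three_eq hα, show padovan (n + 3 + 3) = padovan (n + 1 + 3) +
      padovan (n + 3) from rfl, Nat.cast_add]
    linarith

theorem mul_padovan_le_pow (hα : α ^ 3 = α + 1) : ∀ n : ℕ, α * padovan n ≤ α ^ n
  | 0 => by simp [padovan]
  | 1 => by simp [padovan]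
  | 2 => by norm_num [padovan]; nlinarith [one_lt hα]
  | n + 3 => by
    have h₁ := mul_padovan_le_pow hα (n + 1)
    have h₀ := mul_padovan_le_pow hα n
    rw [pow_add_three_of_pow_three_eq hα, show padovan (n + 3) = padovan (n + 1) +
      padovan n from rfl, Nat.cast_add]
    linarith

theorem padovan_add_padovan_le_pow (hα : α ^ 3 = α + 1) {m n : ℕ} (hmn : m < n) :
    (padovan n + padovan m : ℝ) ≤ α ^ (n + 1) := by
  have hα1 := one_lt hα
  have hm : α * (α * padovan m) ≤ α ^ n := calc
    α * (α * padovan m) ≤ α * α ^ m := by gcongr; exact mul_padovan_le_pow hα m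
    _ = α ^ (m + 1) := by ring
    _ ≤ α ^ n := pow_le_pow_right₀ hα1.le hmn
  have hn : α * (α * padovan n) ≤ α * α ^ n := by gcongr; exact mul_padovan_le_pow hα n
  have key : α ^ 2 * (padovan n + padovan m : ℝ) ≤ α ^ 2 * α ^ (n + 1) := by
    rw [← pow_add, show 2 + (n + 1) = n + 3 by ring, pow_add_three_of_pow_three_eq hα]
    linear_combination hm + hn
  exact le_of_mul_le_mul_left key (by positivity)

theorem two_mul_padovan_add_padovan_add_one_lt (hα : α ^ 3 = α + 1) {m n : ℕ} (hmn : m < n) :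
    2 * (padovan n + padovan m : ℝ) + 1 < 2 * α ^ (n + 3) := by
  have h := padovan_add_padovan_le_pow hα hmn
  have hn : 1 ≤ α ^ n := one_le_pow₀ (one_lt hα).le
  rw [pow_add_three_of_pow_three_eq hα]
  linarith

theorem pow_lt_sq_mul_two_mul_padovan_add_padovan_sub_one (hα : α ^ 3 = α + 1) {m n : ℕ}
    (hm : 3 ≤ m) (hmn : m < n) :
    α ^ n < α ^ 2 * (2 * (padovan n + padovan m : ℝ) - 1) := by
  obtain ⟨i, rfl⟩ := Nat.exists_eq_add_of_le' hm
  obtain ⟨j, rfl⟩ := Nat.exists_eq_add_of_le' (hm.trans hmn.le)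
  have hα1 := one_lt hα
  have hα2 : α < 2 := by nlinarith [sq_lt_two hα]
  have hPn := pow_le_padovan_add_three hα j
  have hPm : 1 ≤ (padovan (i + 3) : ℝ) := (one_le_pow₀ hα1.le).trans (pow_le_padovan_add_three hα i)
  have hαj : 0 < α ^ j := by positivity
  calc α ^ (j + 3) = α ^ 2 * (α * α ^ j) := by ring
    _ < α ^ 2 * (2 * α ^ j + 1) := by gcongr; nlinarith
    _ ≤ α ^ 2 * (2 * (padovan (j + 3) + padovan (i + 3) : ℝ) - 1) := by gcongr; linarith

end PlasticNumber

theorem abs_le_one_of_mul_eq_one_or_neg_one {δ σ : ℝ} (hδ : 1 ≤ δ)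
    (hσ : δ * σ = 1 ∨ δ * σ = -1) : |σ| ≤ 1 := by
  have h : δ * |σ| = 1 := by
    rw [← abs_of_nonneg (zero_le_one.trans hδ), ← abs_mul]
    rcases hσ with h | h <;> simp [h]
  nlinarith [abs_nonneg σ]

theorem sub_two_mul_log_lt_mul_log {α δ : ℝ} {k n : ℕ} (hα : 0 < α) (hδ : 0 < δ)
    (h : α ^ n < α ^ 2 * δ ^ k) : ((n : ℝ) - 2) * Real.log α < k * Real.log δ := by
  have h' := Real.log_lt_log (by positivity) h
  rw [Real.log_mul (by positivity) (by positivity), Real.log_pow, Real.log_pow,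
    Real.log_pow] at h'
  push_cast at h'
  linarith

theorem mul_log_lt_add_three_mul_log_add_log_two {α δ : ℝ} {k n : ℕ} (hα : 0 < α) (hδ : 0 < δ)
    (h : δ ^ k < 2 * α ^ (n + 3)) :
    (k : ℝ) * Real.log δ < ((n : ℝ) + 3) * Real.log α + Real.log 2 := by
  have h' := Real.log_lt_log (by positivity) h
  rw [Real.log_mul (by positivity) (by positivity), Real.log_pow, Real.log_pow] at h'
  push_cast at h'
  linarith

theorem pell_padovan_k_n_ineq_general (α δ σ : ℝ) (hα : α ^ 3 - α - 1 = 0)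
    (hδ : 1 + Real.sqrt 2 ≤ δ) (hσ : δ * σ = 1 ∨ δ * σ = -1)
    (k n m : ℕ) (hm : 3 ≤ m) (hmn : m < n)
    (heq : (δ ^ k + σ ^ k) / 2 = (padovan n + padovan m : ℝ)) :
    ((n : ℝ) - 2) * Real.log α < k * Real.log δ ∧
    (k : ℝ) * Real.log δ < ((n : ℝ) + 3) * Real.log α + Real.log 2 ∧
    |(n : ℝ) - k * Real.log δ / Real.log α| < 6 := by
  have hα3 : α ^ 3 = α + 1 := by linarith
  have hα1 := PlasticNumber.one_lt hα3
  have hδ1 : 1 ≤ δ := le_trans (by simp) hδ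
  have hσk : |σ ^ k| ≤ 1 := by
    rw [abs_pow]; exact pow_le_one₀ (abs_nonneg σ) (abs_le_one_of_mul_eq_one_or_neg_one hδ1 hσ)
  obtain ⟨hσk₁, hσk₂⟩ := abs_le.mp hσk
  have hlow : α ^ n < α ^ 2 * δ ^ k :=
    (PlasticNumber.pow_lt_sq_mul_two_mul_padovan_add_padovan_sub_one hα3 hm hmn).trans_le
      (by gcongr; linarith)
  have hup : δ ^ k < 2 * α ^ (n + 3) := by
    linarith [PlasticNumber.two_mul_padovan_add_padovan_add_one_lt hα3 hmn]
  have hlow' := sub_two_mul_log_lt_mul_log (zero_lt_one.trans hα1) (by linarith) hlow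
  have hup' := mul_log_lt_add_three_mul_log_add_log_two (zero_lt_one.trans hα1) (by linarith) hup
  have hlogα : 0 < Real.log α := Real.log_pos hα1
  have hlog2 : Real.log 2 < 3 * Real.log α := by
    have h := Real.log_lt_log two_pos (show (2 : ℝ) < α ^ 3 by linarith)
    rwa [Real.log_pow, Nat.cast_ofNat] at h
  have hratio₁ : (n : ℝ) - 2 < k * Real.log δ / Real.log α := by
    rw [lt_div_iff₀ hlogα]; exact hlow'
  have hratio₂ : k * Real.log δ / Real.log α < n + 6 := by
    rw [div_lt_iff₀ hlogα]; linarith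
  exact ⟨hlow', hup', abs_lt.mpr ⟨by linarith, by linarith⟩⟩

theorem pell_padovan_k_n_ineq (α δ σ : ℝ) (hα : α ^ 3 - α - 1 = 0)
    (hδ : 1 + Real.sqrt 2 ≤ δ) (hσ : δ * σ = 1 ∨ δ * σ = -1)
    (k n m : ℕ) (hk : 1 ≤ k) (hm : 3 ≤ m) (hmn : m < n)
    (heq : (δ ^ k + σ ^ k) / 2 = (padovan n + padovan m : ℝ)) :
    ((n : ℝ) - 2) * Real.log α < k * Real.log δ ∧
    (k : ℝ) * Real.log δ < ((n : ℝ) + 3) * Real.log α + Real.log 2 ∧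
    |(n : ℝ) - k * Real.log δ / Real.log α| < 6 :=
  pell_padovan_k_n_ineq_general α δ σ hα hδ hσ k n m hm hmn heq
end

section
/- If (k, n, m) is a solution of x_k = P(n) + P(m) with 3 ≤ m < n and n ≥ 4, where x_k = (δ^k + σ^k)/2 comes from the Pell equation x² - dy² = ±1, then k < n. -/
theorem padovan_le_succ : ∀ n, padovan n ≤ padovan (n + 1)
  | 0 | 1 | 2 => by decide
  | n + 3 => by
    have h₀ := padovan_le_succ n
    have h₁ : padovan (n + 1) ≤ padovan (n + 2) := padovan_le_succ (n + 1)
    show padovan (n + 1) + padovan n ≤ padovan (n + 2) + padovan (n + 1)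
    omega

theorem padovan_monotone : Monotone padovan :=
  monotone_nat_of_le_succ padovan_le_succ

theorem padovan_le_pow {r : ℝ} (hr₁ : 1 ≤ r) (hr : r + 1 ≤ r ^ 3) :
    ∀ n, (padovan n : ℝ) ≤ r ^ n
  | 0 => by simp [padovan]
  | 1 => by simpa [padovan] using hr₁
  | 2 => by simpa [padovan] using one_le_pow₀ (n := 2) hr₁
  | n + 3 => by
    have h₀ := padovan_le_pow hr₁ hr n
    have h₁ := padovan_le_pow hr₁ hr (n + 1)
    calc (padovan (n + 3) : ℝ) = padovan (n + 1) + padovan n := by simp [padovan]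
      _ ≤ r ^ n * (r + 1) := by rw [pow_succ] at h₁; linarith
      _ ≤ r ^ n * r ^ 3 := by gcongr
      _ = r ^ (n + 3) := (pow_add r n 3).symm

theorem four_mul_pow_add_one_lt_two_pow {n : ℕ} (hn : 4 ≤ n) :
    4 * (4 / 3 : ℝ) ^ n + 1 < 2 ^ n := by
  induction n, hn using Nat.le_induction with
  | base => norm_num
  | succ n _ ih =>
    have : (0 : ℝ) ≤ (4 / 3) ^ n := by positivity
    rw [pow_succ, pow_succ]
    linarith

theorem neg_one_le_pow_of_mul_eq_one_or_neg_one {δ σ : ℝ} (hδ : 1 ≤ δ)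
    (hσ : δ * σ = 1 ∨ δ * σ = -1) (k : ℕ) : -1 ≤ σ ^ k := by
  have hσ₁ : |σ| ≤ 1 := by
    have hδσ : |δ| * |σ| = 1 := by
      rw [← abs_mul]
      rcases hσ with h | h <;> simp [h]
    rw [abs_of_pos (by linarith)] at hδσ
    nlinarith [abs_nonneg σ]
  have : |σ ^ k| ≤ 1 := by
    rw [abs_pow]
    exact pow_le_one₀ (abs_nonneg σ) hσ₁
  exact (abs_le.mp this).1

theorem pell_padovan_k_lt_n_general (δ σ : ℝ)
    (hδ : 1 + Real.sqrt 2 ≤ δ) (hσ : δ * σ = 1 ∨ δ * σ = -1)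
    (k n m : ℕ) (hmn : m < n) (hn : 4 ≤ n)
    (heq : (δ ^ k + σ ^ k) / 2 = (padovan n + padovan m : ℝ)) :
    k < n := by
  by_contra! hkn
  have hδ₂ : 2 ≤ δ := by linarith [Real.one_le_sqrt.mpr one_le_two]
  have hσk := neg_one_le_pow_of_mul_eq_one_or_neg_one (by linarith) hσ k
  have hδk : 2 ^ n ≤ δ ^ k :=
    (pow_le_pow_left₀ zero_le_two hδ₂ n).trans (pow_le_pow_right₀ (by linarith) hkn)
  have hPm : (padovan m : ℝ) ≤ padovan n := by exact_mod_cast padovan_monotone hmn.le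
  have hPn := padovan_le_pow (r := 4 / 3) (by norm_num) (by norm_num) n
  linarith [four_mul_pow_add_one_lt_two_pow hn]

theorem pell_padovan_k_lt_n (α δ σ : ℝ) (hα : α ^ 3 - α - 1 = 0)
    (hδ : 1 + Real.sqrt 2 ≤ δ) (hσ : δ * σ = 1 ∨ δ * σ = -1)
    (k n m : ℕ) (hk : 1 ≤ k) (hm : 3 ≤ m) (hmn : m < n) (hn : 4 ≤ n)
    (heq : (δ ^ k + σ ^ k) / 2 = (padovan n + padovan m : ℝ)) :
    k < n :=
  pell_padovan_k_lt_n_general δ σ hδ hσ k n m hmn hn heq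
end
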